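/- For every nonempty bounded set F ⊆ ℝ^n with dim_{qA}(F) > 0, the phase-transition parameter satisfies ρ(F) ≥ 1 − \overline{dim}_B(F)/dim_{qA}(F). -/

import Mathlib

open Set Metric
open scoped ENNReal

noncomputable section

/-- Covering number: the smallest number of sets of diameter at most `r` needed to
cover `F` (`∞` if no finite such cover exists). -/
def coverN {X : Type*} [PseudoMetricSpace X] (F : Set X) (r : ℝ) : ℝ≥0∞ :=
  sInf {m : ℝ≥0∞ | ∃ 𝒰 : Finset (Set X), (𝒰.card : ℝ≥0∞) = m ∧
    (∀ U ∈ 𝒰, EMetric.diam U ≤ ENNReal.ofReal r) ∧ F ⊆ ⋃ U ∈ 𝒰, U}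

/-- Regularized Assouad spectrum `dim_{A,reg}^θ(F)`. -/
def dimAreg {X : Type*} [PseudoMetricSpace X] (θ : ℝ) (F : Set X) : ℝ :=
  sInf {α : ℝ | 0 < α ∧ ∃ C : ℝ, 0 < C ∧ ∀ x ∈ F, ∀ r R : ℝ,
    0 < r → r ≤ R ^ (1/θ) → R ^ (1/θ) < R → R < 1 →
    coverN (closedBall x R ∩ F) r ≤ ENNReal.ofReal (C * (R/r) ^ α)}

/-- (Unregularized) Assouad spectrum `dim_A^θ(F)`. -/
def dimAspec {X : Type*} [PseudoMetricSpace X] (θ : ℝ) (F : Set X) : ℝ :=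
  sInf {α : ℝ | 0 < α ∧ ∃ C : ℝ, 0 < C ∧ ∀ x ∈ F, ∀ R : ℝ, 0 < R → R < 1 →
    coverN (closedBall x R ∩ F) (R ^ (1/θ)) ≤ ENNReal.ofReal (C * (R / R ^ (1/θ)) ^ α)}

/-- Upper box-counting dimension of a (bounded) set. -/
def dimBupper {X : Type*} [PseudoMetricSpace X] (F : Set X) : ℝ :=
  sInf {α : ℝ | 0 < α ∧ ∃ C : ℝ, 0 < C ∧ ∀ r : ℝ, 0 < r → r ≤ diam F →
    coverN F r ≤ ENNReal.ofReal (C * r ^ (-α))}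

/-- Assouad dimension. -/
def dimA {X : Type*} [PseudoMetricSpace X] (F : Set X) : ℝ :=
  sInf {α : ℝ | 0 < α ∧ ∃ C : ℝ, 0 < C ∧ ∀ x ∈ F, ∀ r R : ℝ, 0 < r → r ≤ R →
    coverN (closedBall x R ∩ F) r ≤ ENNReal.ofReal (C * (R/r) ^ α)}

/-- Quasi-Assouad dimension: `sup_{0<θ<1} dim_{A,reg}^θ(F)`. -/
def dimqA {X : Type*} [PseudoMetricSpace X] (F : Set X) : ℝ :=
  sSup ((fun θ => dimAreg θ F) '' Ioo (0:ℝ) 1)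

open Classical in
/-- Phase-transition parameter `ρ(F)`. -/
def rhoPT {X : Type*} [PseudoMetricSpace X] (F : Set X) : ℝ :=
  if ∃ θ ∈ Ioo (0:ℝ) 1, dimAreg θ F = dimqA F
  then sInf {θ | θ ∈ Ioo (0:ℝ) 1 ∧ dimAreg θ F = dimqA F}
  else 1

/-- The axes-parallel cube `Q(x,R) = ∏ [xᵢ - R, xᵢ + R]`. -/
def cubeQ {n : ℕ} (x : EuclideanSpace ℝ (Fin n)) (R : ℝ) : Set (EuclideanSpace ℝ (Fin n)) :=
  {y | ∀ i, x i - R ≤ y i ∧ y i ≤ x i + R}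

/-- The generation-`m` dyadic subcube of `Q(x,R)` with index `k`. -/
def dyadicCube {n : ℕ} (x : EuclideanSpace ℝ (Fin n)) (R : ℝ) (m : ℕ)
    (k : Fin n → Fin (2 ^ m)) : Set (EuclideanSpace ℝ (Fin n)) :=
  {y | ∀ i, x i - R + (k i : ℝ) * (2 * R / 2 ^ m) ≤ y i ∧
        y i ≤ x i - R + ((k i : ℝ) + 1) * (2 * R / 2 ^ m)}

/-- `N_d(B(x,R) ∩ F, m)`: the number of generation-`m` dyadic subcubes of `Q(x,R)`
that intersect `B(x,R) ∩ F`. -/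
def Nd {n : ℕ} (x : EuclideanSpace ℝ (Fin n)) (R : ℝ)
    (F : Set (EuclideanSpace ℝ (Fin n))) (m : ℕ) : ℕ :=
  Nat.card {k : Fin n → Fin (2 ^ m) // (dyadicCube x R m k ∩ (closedBall x R ∩ F)).Nonempty}

/-- `f` is `η`-quasisymmetric on the set `S`. -/
def QSOn {X Y : Type*} [PseudoMetricSpace X] [PseudoMetricSpace Y]
    (η : ℝ → ℝ) (f : X → Y) (S : Set X) : Prop :=
  ∀ x ∈ S, ∀ y ∈ S, ∀ z ∈ S, x ≠ z →
    dist (f x) (f y) ≤ η (dist x y / dist x z) * dist (f x) (f z)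

/-- Distance between two sets. -/
def setDist {X : Type*} [PseudoMetricSpace X] (A B : Set X) : ℝ :=
  sInf {d : ℝ | ∃ a ∈ A, ∃ b ∈ B, d = dist a b}

end

/-!
If `N(F, r) ≤ C r^{-γ}`, then at scales `r ≤ R^{1/θ}` we have `R/r ≥ r^{θ-1}`, hence
`N(B(x,R) ∩ F, r) ≤ N(F, r) ≤ C r^{-γ} ≤ C (R/r)^{γ/(1-θ)}`, so
`(1 - θ) dim_{A,reg}^θ F ≤ dim_B F`. At any `θ` where the spectrum already equals `dim_qA F` this
reads `θ ≥ 1 - dim_B F / dim_qA F`. A grid count shows that bounded subsets of `ℝⁿ` admit some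
exponent `γ`, so `dim_B F` is a genuine infimum rather than the junk value of `sInf ∅`.
-/

open Bornology

section CoveringNumber

variable {X : Type*} [PseudoMetricSpace X]

lemma coverN_le_card {F : Set X} {r : ℝ} (𝒰 : Finset (Set X))
    (hdiam : ∀ U ∈ 𝒰, ediam U ≤ ENNReal.ofReal r) (hcover : F ⊆ ⋃ U ∈ 𝒰, U) :
    coverN F r ≤ 𝒰.card :=
  sInf_le ⟨𝒰, rfl, hdiam, hcover⟩

lemma coverN_mono {A B : Set X} (h : A ⊆ B) (r : ℝ) : coverN A r ≤ coverN B r := by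
  apply sInf_le_sInf
  rintro m ⟨𝒰, hcard, hdiam, hcover⟩
  exact ⟨𝒰, hcard, hdiam, h.trans hcover⟩

lemma coverN_le_one {F : Set X} {r : ℝ} (h : ediam F ≤ ENNReal.ofReal r) : coverN F r ≤ 1 := by
  simpa using coverN_le_card (F := F) {F} (by simpa using h) (by simp)

end CoveringNumber

section BoxDimension

variable {X : Type*} [PseudoMetricSpace X]

/-- `dimBupper F` is the infimum of this set, a junk `0` when the set is empty. -/
def boxExponents (F : Set X) : Set ℝ :=
  {α : ℝ | 0 < α ∧ ∃ C : ℝ, 0 < C ∧ ∀ r : ℝ, 0 < r → r ≤ diam F →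
    coverN F r ≤ ENNReal.ofReal (C * r ^ (-α))}

lemma dimBupper_eq_sInf_boxExponents (F : Set X) : dimBupper F = sInf (boxExponents F) := rfl

lemma dimBupper_nonneg (F : Set X) : 0 ≤ dimBupper F :=
  Real.sInf_nonneg fun _ hα => hα.1.le

end BoxDimension

section Euclidean

variable {n : ℕ}

lemma EuclideanSpace.dist_le_of_floor_div_eq {s : ℝ} (hs : 0 < s) {y z : EuclideanSpace ℝ (Fin n)}
    (h : ∀ i, ⌊y i / s⌋ = ⌊z i / s⌋) : dist y z ≤ √n * s := by
  have hcoord : ∀ i, dist (y i) (z i) ≤ s := fun i => by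
    have := Int.abs_sub_lt_one_of_floor_eq_floor (h i)
    rw [← sub_div, abs_div, abs_of_pos hs, div_lt_one hs] at this
    exact (Real.dist_eq _ _).trans_le this.le
  calc dist y z = √(∑ i, dist (y i) (z i) ^ 2) := EuclideanSpace.dist_eq y z
    _ ≤ √(∑ _i : Fin n, s ^ 2) := by gcongr with i; exact hcoord i
    _ = √n * s := by simp [Real.sqrt_sq hs.le]

lemma floor_div_mem_Icc_of_abs_le {t D s : ℝ} (hs : 0 < s) (ht : |t| ≤ D) :
    ⌊t / s⌋ ∈ Finset.Icc (-(⌈D / s⌉₊ : ℤ)) ⌈D / s⌉₊ := by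
  have hD : D / s ≤ ⌈D / s⌉₊ := Nat.le_ceil _
  have htD : |t / s| ≤ D / s := by
    rw [abs_div, abs_of_pos hs]
    gcongr
  obtain ⟨hlow, hup⟩ := abs_le.mp htD
  rw [Finset.mem_Icc, Int.le_floor]
  constructor
  · push_cast
    linarith
  · exact_mod_cast (Int.floor_le _).trans (hup.trans hD)

lemma coverN_le_of_subset_closedBall {F : Set (EuclideanSpace ℝ (Fin n))} {D s r : ℝ}
    (hs : 0 < s) (hFD : F ⊆ closedBall 0 D) (hr : √n * s ≤ r) :
    coverN F r ≤ ((2 * ⌈D / s⌉₊ + 1) ^ n : ℕ) := by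
  classical
  set M : ℕ := ⌈D / s⌉₊
  let cell : (Fin n → ℤ) → Set (EuclideanSpace ℝ (Fin n)) := fun k => {y | ∀ i, ⌊y i / s⌋ = k i}
  let K : Finset (Fin n → ℤ) := Fintype.piFinset fun _ => Finset.Icc (-(M : ℤ)) M
  have hdiam : ∀ U ∈ K.image cell, ediam U ≤ ENNReal.ofReal r := by
    simp only [Finset.mem_image]
    rintro _ ⟨k, -, rfl⟩
    refine ediam_le_of_forall_dist_le fun y hy z hz => ?_
    refine (EuclideanSpace.dist_le_of_floor_div_eq hs fun i => ?_).trans hr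
    rw [hy i, hz i]
  have hcover : F ⊆ ⋃ U ∈ K.image cell, U := by
    intro y hy
    have hyD : ‖y‖ ≤ D := by simpa using hFD hy
    refine mem_biUnion (Finset.mem_image_of_mem cell (Fintype.mem_piFinset.mpr fun i => ?_))
      (show y ∈ cell fun i => ⌊y i / s⌋ from fun i => rfl)
    exact floor_div_mem_Icc_of_abs_le hs ((PiLp.norm_apply_le y i).trans hyD)
  have hcard : (K.image cell).card ≤ (2 * M + 1) ^ n := by
    refine Finset.card_image_le.trans_eq ?_
    simp only [K, Fintype.card_piFinset, Int.card_Icc, Finset.prod_const, Finset.card_univ,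
      Fintype.card_fin]
    congr 1
    omega
  exact (coverN_le_card _ hdiam hcover).trans (by exact_mod_cast hcard)

lemma boxExponents_nonempty {F : Set (EuclideanSpace ℝ (Fin n))} (hF : IsBounded F) :
    (boxExponents F).Nonempty := by
  obtain ⟨D, hD, hFD⟩ := hF.subset_closedBall_lt 0 0
  have hdiam : diam F ≤ 2 * D :=
    (diam_mono hFD isBounded_closedBall).trans (diam_closedBall hD.le)
  -- `2⌈D/s⌉ + 1 ≤ 2D/s + 3`, and `3 ≤ 6D/r` since `r ≤ 2D`
  set A : ℝ := 2 * D * (√n + 1) + 6 * D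
  refine ⟨n + 1, by positivity, A ^ (n + 1), by positivity, fun r hr hrF => ?_⟩
  have hr2D : r ≤ 2 * D := hrF.trans hdiam
  set s : ℝ := r / (√n + 1)
  have hs : 0 < s := by positivity
  have hsr : √n * s ≤ r := by
    rw [mul_div_assoc', div_le_iff₀ (by positivity)]
    nlinarith
  have hM : (⌈D / s⌉₊ : ℝ) ≤ D / s + 1 := (Nat.ceil_lt_add_one (by positivity)).le
  have hcount : ((2 * ⌈D / s⌉₊ + 1 : ℕ) : ℝ) ≤ A / r := by
    rw [le_div_iff₀ hr]
    have hDs : D / s * r = D * (√n + 1) := by simp only [s]; field_simp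
    push_cast
    nlinarith
  have hAr : 1 ≤ A / r := le_trans (by norm_cast; omega) hcount
  calc coverN F r ≤ ((2 * ⌈D / s⌉₊ + 1) ^ n : ℕ) := coverN_le_of_subset_closedBall hs hFD hsr
    _ ≤ ENNReal.ofReal ((A / r) ^ (n + 1)) := by
        rw [← ENNReal.ofReal_natCast, Nat.cast_pow]
        gcongr
        exact (pow_le_pow_left₀ (by positivity) hcount n).trans
          (pow_le_pow_right₀ hAr n.le_succ)
    _ = ENNReal.ofReal (A ^ (n + 1) * r ^ (-((n : ℝ) + 1))) := by
        rw [Real.rpow_neg hr.le, ← Nat.cast_succ, Real.rpow_natCast, div_pow, div_eq_mul_inv]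

end Euclidean

section RegularizedAssouadSpectrum

variable {X : Type*} [PseudoMetricSpace X]

lemma rpow_neg_le_div_rpow {θ γ r R : ℝ} (hθ : θ ∈ Ioo (0 : ℝ) 1) (hγ : 0 ≤ γ) (hr : 0 < r)
    (hR : 0 < R) (hrR : r ≤ R ^ (1 / θ)) : r ^ (-γ) ≤ (R / r) ^ (γ / (1 - θ)) := by
  obtain ⟨hθ0, hθ1⟩ := hθ
  have hrθ : r ^ θ ≤ R := by
    calc r ^ θ ≤ (R ^ (1 / θ)) ^ θ := by gcongr
      _ = R := by rw [← Real.rpow_mul hR.le, one_div_mul_cancel hθ0.ne', Real.rpow_one]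
  have hratio : r ^ (θ - 1) ≤ R / r := by
    rw [Real.rpow_sub_one hr.ne']
    gcongr
  calc r ^ (-γ) = (r ^ (θ - 1)) ^ (γ / (1 - θ)) := by
        rw [← Real.rpow_mul hr.le]
        congr 1
        field_simp [(sub_pos.mpr hθ1).ne']
        ring
    _ ≤ (R / r) ^ (γ / (1 - θ)) := by gcongr

lemma dimAreg_le_div_of_mem_boxExponents {F : Set X} (hF : IsBounded F) {θ γ : ℝ}
    (hθ : θ ∈ Ioo (0 : ℝ) 1) (hγ : γ ∈ boxExponents F) : dimAreg θ F ≤ γ / (1 - θ) := by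
  obtain ⟨hγ0, C, -, hbox⟩ := hγ
  have hα : 0 < γ / (1 - θ) := div_pos hγ0 (sub_pos.mpr hθ.2)
  refine csInf_le ⟨0, fun _ hβ => hβ.1.le⟩ ⟨hα, max C 1, by positivity, ?_⟩
  intro x _ r R hr hrR hRR _
  have hR : 0 < R := hr.trans_le (hrR.trans hRR.le)
  by_cases hrF : r ≤ diam F
  · calc coverN (closedBall x R ∩ F) r ≤ coverN F r := coverN_mono inter_subset_right r
      _ ≤ ENNReal.ofReal (C * r ^ (-γ)) := hbox r hr hrF
      _ ≤ ENNReal.ofReal (max C 1 * (R / r) ^ (γ / (1 - θ))) := by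
          gcongr
          · exact le_max_left _ _
          · exact rpow_neg_le_div_rpow hθ hγ0.le hr hR hrR
  · have hsmall : ediam (closedBall x R ∩ F) ≤ ENNReal.ofReal r := by
      refine (ediam_mono inter_subset_right).trans ?_
      rw [← ENNReal.ofReal_toReal hF.ediam_ne_top]
      exact ENNReal.ofReal_le_ofReal (not_le.mp hrF).le
    refine (coverN_le_one hsmall).trans (ENNReal.one_le_ofReal.mpr ?_)
    have hRr : 1 ≤ (R / r) ^ (γ / (1 - θ)) :=
      Real.one_le_rpow ((one_le_div hr).mpr (hrR.trans hRR.le)) hα.le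
    nlinarith [le_max_right C 1]

lemma one_sub_mul_dimAreg_le_dimBupper {F : Set X} (hF : IsBounded F)
    (hbox : (boxExponents F).Nonempty) {θ : ℝ} (hθ : θ ∈ Ioo (0 : ℝ) 1) :
    (1 - θ) * dimAreg θ F ≤ dimBupper F := by
  rw [dimBupper_eq_sInf_boxExponents]
  refine le_csInf hbox fun γ hγ => ?_
  have := dimAreg_le_div_of_mem_boxExponents hF hθ hγ
  rwa [le_div_iff₀ (sub_pos.mpr hθ.2), mul_comm] at this

end RegularizedAssouadSpectrum

lemma le_rhoPT_of_forall {X : Type*} [PseudoMetricSpace X] {F : Set X} {a : ℝ} (ha : a ≤ 1)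
    (h : ∀ θ ∈ Ioo (0 : ℝ) 1, dimAreg θ F = dimqA F → a ≤ θ) : a ≤ rhoPT F := by
  unfold rhoPT
  split_ifs with hex
  · obtain ⟨θ, hθ, hθq⟩ := hex
    exact le_csInf ⟨θ, hθ, hθq⟩ fun θ' hθ' => h θ' hθ'.1 hθ'.2
  · exact ha

theorem stmt12_general {n : ℕ} (F : Set (EuclideanSpace ℝ (Fin n)))
    (hF : Bornology.IsBounded F) (hqA : 0 < dimqA F) :
    1 - dimBupper F / dimqA F ≤ rhoPT F := by
  refine le_rhoPT_of_forall
    (sub_le_self _ (div_nonneg (dimBupper_nonneg F) hqA.le)) fun θ hθ hθq => ?_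
  have h := one_sub_mul_dimAreg_le_dimBupper hF (boxExponents_nonempty hF) hθ
  rw [hθq] at h
  rw [sub_le_comm, le_div_iff₀ hqA]
  linarith

/-- lower bound for the phase-transition parameter. -/
theorem stmt12 {n : ℕ} (F : Set (EuclideanSpace ℝ (Fin n)))
    (hne : F.Nonempty) (hF : Bornology.IsBounded F) (hqA : 0 < dimqA F) :
    1 - dimBupper F / dimqA F ≤ rhoPT F :=
  stmt12_general F hF hqA
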